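/- Let λ ∈ ℂ with |λ| = 1 be a Cremer number (limsup_{m→∞}(1/m)log(1/ω(m)) = +∞, ω(m) = min_{2≤k≤m}|λ^k − λ|). Then there exists a sequence (a_n)_{n≥1} with a₁ = 1 and a_n ∈ {0,1} for n ≥ 2 such that, defining recursively φ₀ = 0, φ₁ = a₁/(λ−1), φ_n = (λ^n − 1)^{-1}(a_n + Σ_{j=1}^{n−1} φ_j φ_{n−j}) for n ≥ 2, one has |a_n + Σ_{j=1}^{n−1} φ_j φ_{n−j}| ≥ 1/2 for all n ≥ 2, and consequently limsup_{n→∞} (1/n) log|φ_n| = +∞, so the formal power series φ(z) = Σ φ_n z^n has radius of convergence zero. -/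

import Mathlib

/-!
Choosing `a_n ∈ {0, 1}` so that the numerator `a_n + Σ φ_j φ_{n-j}` never has modulus below `1/2`
gives `|φ_n| ≥ 1 / (2 |λ^n - 1|)`. The minimum `ω(m)` is some `|λ^{n+1} - λ| = |λ^n - 1|` with
`n < m`, so the Cremer condition says that `(1/n) log (1/|λ^n - 1|)` is unbounded, hence so is
`(1/n) log |φ_n|`, and `Σ φ_n z^n` has unbounded terms for every `z ≠ 0`.
-/

open Filter Finset

/-- `ω(m) = min_{2 ≤ k ≤ m} |λ^k - λ|`. -/
noncomputable def brjunoOmega (l : ℂ) (m : ℕ) : ℝ :=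
  sInf ((fun k : ℕ => ‖l ^ k - l‖) '' Set.Icc 2 m)

lemma EReal.limsup_coe_eq_top_iff {α : Type*} {f : Filter α} {u : α → ℝ} :
    limsup (fun a => (u a : EReal)) f = ⊤ ↔ ∀ B : ℝ, ∃ᶠ a in f, B < u a := by
  refine ⟨fun h B => ?_, fun h => EReal.eq_top_iff_forall_lt _ |>.mpr fun B => ?_⟩
  · have := frequently_lt_of_lt_limsup (h := h ▸ EReal.coe_lt_top B)
    exact this.mono fun _ => EReal.coe_lt_coe_iff.mp
  · refine (EReal.coe_lt_coe_iff.mpr (lt_add_one B)).trans_le (le_limsup_of_frequently_le' ?_)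
    exact (h (B + 1)).mono fun _ hB => EReal.coe_le_coe_iff.mpr hB.le

/-- The `n`-th coefficient of `φ²` when `φ 0 = 0`. -/
def selfConv (φ : ℕ → ℂ) (n : ℕ) : ℂ :=
  ∑ j ∈ Icc 1 (n - 1), φ j * φ (n - j)

noncomputable def cremerChoice (c : ℂ) : ℂ :=
  if (1 / 2 : ℝ) ≤ ‖c‖ then 0 else 1

lemma cremerChoice_eq_zero_or_eq_one (c : ℂ) : cremerChoice c = 0 ∨ cremerChoice c = 1 := by
  unfold cremerChoice
  split_ifs <;> simp

lemma half_le_norm_cremerChoice_add (c : ℂ) : (1 / 2 : ℝ) ≤ ‖cremerChoice c + c‖ := by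
  unfold cremerChoice
  split_ifs with h
  · simpa using h
  · have := norm_sub_norm_le (1 : ℂ) (-c)
    rw [sub_neg_eq_add, norm_neg, norm_one] at this
    linarith

noncomputable def cremerSeries (l : ℂ) : ℕ → ℂ
  | 0 => 0
  | 1 => 1 / (l - 1)
  | n + 2 =>
      let S := ∑ j ∈ (Icc 1 (n + 1)).attach, cremerSeries l j * cremerSeries l (n + 2 - j)
      (l ^ (n + 2) - 1)⁻¹ * (cremerChoice S + S)
decreasing_by all_goals (have := mem_Icc.mp j.2; omega)

noncomputable def cremerCoeff (l : ℂ) (n : ℕ) : ℂ :=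
  if n = 1 then 1 else cremerChoice (selfConv (cremerSeries l) n)

lemma cremerSeries_eq (l : ℂ) {n : ℕ} (hn : 2 ≤ n) :
    cremerSeries l n = (l ^ n - 1)⁻¹ * (cremerCoeff l n + selfConv (cremerSeries l) n) := by
  obtain ⟨n, rfl⟩ : ∃ k, n = k + 2 := ⟨n - 2, by omega⟩
  rw [cremerSeries,
    sum_attach (Icc 1 (n + 1)) fun j => cremerSeries l j * cremerSeries l (n + 2 - j)]
  rfl

lemma cremerCoeff_of_two_le (l : ℂ) {n : ℕ} (hn : 2 ≤ n) :
    cremerCoeff l n = cremerChoice (selfConv (cremerSeries l) n) :=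
  if_neg (by omega)

lemma inv_two_mul_norm_le_norm_cremerSeries (l : ℂ) {n : ℕ} (hn : 2 ≤ n) :
    (2 * ‖l ^ n - 1‖)⁻¹ ≤ ‖cremerSeries l n‖ := by
  have := half_le_norm_cremerChoice_add (selfConv (cremerSeries l) n)
  rw [cremerSeries_eq l hn, cremerCoeff_of_two_le l hn, norm_mul, norm_inv, mul_inv,
    mul_comm (2⁻¹ : ℝ)]
  exact mul_le_mul_of_nonneg_left (by rwa [one_div] at this) (by positivity)

lemma exists_brjunoOmega_eq (l : ℂ) {m : ℕ} (hm : 2 ≤ m) :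
    ∃ k ∈ Set.Icc 2 m, brjunoOmega l m = ‖l ^ k - l‖ := by
  have hne : ((fun k : ℕ => ‖l ^ k - l‖) '' Set.Icc 2 m).Nonempty :=
    ⟨_, 2, ⟨le_rfl, hm⟩, rfl⟩
  obtain ⟨k, hk, hkeq⟩ := hne.csInf_mem ((Set.finite_Icc 2 m).image _)
  exact ⟨k, hk, hkeq.symm⟩

lemma one_div_mul_le_max_zero {a n m : ℝ} (hn : 0 < n) (hnm : n ≤ m) :
    1 / m * a ≤ max 0 (1 / n * a) := by
  rcases le_or_gt a 0 with ha | ha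
  · exact le_max_of_le_left
      (mul_nonpos_of_nonneg_of_nonpos (one_div_nonneg.mpr (hn.trans_le hnm).le) ha)
  · refine le_max_of_le_right (mul_le_mul_of_nonneg_right ?_ ha.le)
    gcongr

section Cremer

variable {l : ℂ}

lemma norm_pow_succ_sub_self (habs : ‖l‖ = 1) (n : ℕ) : ‖l ^ (n + 1) - l‖ = ‖l ^ n - 1‖ := by
  rw [pow_succ', ← mul_sub_one, norm_mul, habs, one_mul]

lemma limsup_log_inv_norm_pow_sub_one_eq_top (habs : ‖l‖ = 1)
    (hC : limsup (fun m : ℕ => (((1 / m : ℝ) * Real.log (1 / brjunoOmega l m) : ℝ) : EReal))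
      atTop = ⊤) :
    limsup (fun n : ℕ => (((1 / n : ℝ) * Real.log (1 / ‖l ^ n - 1‖) : ℝ) : EReal)) atTop = ⊤ := by
  rw [EReal.limsup_coe_eq_top_iff] at hC ⊢
  by_contra! hbdd
  obtain ⟨B, hB⟩ := hbdd
  obtain ⟨C, hC'⟩ := (IsBoundedUnder.bddAbove_range (f := fun n : ℕ =>
    (1 / n : ℝ) * Real.log (1 / ‖l ^ n - 1‖)) ⟨B, by simpa using hB⟩)
  obtain ⟨m, hm, hm2⟩ := ((hC (max 0 C)).and_eventually (eventually_ge_atTop 2)).exists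
  obtain ⟨k, hk, hω⟩ := exists_brjunoOmega_eq l hm2
  obtain ⟨n, rfl⟩ : ∃ n, k = n + 1 := ⟨k - 1, by have := hk.1; omega⟩
  rw [hω, norm_pow_succ_sub_self habs] at hm
  have hnm := one_div_mul_le_max_zero (a := Real.log (1 / ‖l ^ n - 1‖)) (n := n) (m := m)
    (by exact_mod_cast (by have := hk.1; omega : 0 < n))
    (by exact_mod_cast (by have := hk.2; omega : n ≤ m))
  have hn : 1 / (n : ℝ) * Real.log (1 / ‖l ^ n - 1‖) ≤ C := hC' ⟨n, rfl⟩
  linarith [max_le_max_left 0 hn]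

lemma limsup_log_norm_eq_top_of_inv_le {φ : ℕ → ℂ}
    (hφ : ∀ n, 2 ≤ n → (2 * ‖l ^ n - 1‖)⁻¹ ≤ ‖φ n‖)
    (hl : limsup (fun n : ℕ => (((1 / n : ℝ) * Real.log (1 / ‖l ^ n - 1‖) : ℝ) : EReal))
      atTop = ⊤) :
    limsup (fun n : ℕ => (((1 / n : ℝ) * Real.log ‖φ n‖ : ℝ) : EReal)) atTop = ⊤ := by
  rw [EReal.limsup_coe_eq_top_iff] at hl ⊢
  intro B
  refine ((hl (max B 0 + Real.log 2)).and_eventually (eventually_ge_atTop 2)).mono ?_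
  rintro n ⟨hn, hn2⟩
  set x := ‖l ^ n - 1‖
  have hn1 : 1 ≤ (n : ℝ) := by exact_mod_cast (by omega : 1 ≤ n)
  have hlog2 : 0 < Real.log 2 := Real.log_pos one_lt_two
  have hlog2n : 1 / (n : ℝ) * Real.log 2 ≤ Real.log 2 :=
    mul_le_of_le_one_left hlog2.le ((div_le_one (by positivity)).mpr hn1)
  -- `Real.log (1 / 0) = 0`, so the large divisor term at `n` already forces `λ ^ n ≠ 1`.
  have hx : 0 < x := by
    refine (norm_nonneg _).lt_of_ne' fun hx0 => ?_
    rw [show x = 0 from hx0, div_zero, Real.log_zero, mul_zero] at hn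
    linarith [le_max_right B 0]
  have hφlog : Real.log (1 / x) - Real.log 2 ≤ Real.log ‖φ n‖ := by
    have := Real.log_le_log (by positivity) (hφ n hn2)
    rw [Real.log_inv, Real.log_mul two_ne_zero hx.ne'] at this
    rw [one_div, Real.log_inv]
    linarith
  calc B ≤ max B 0 := le_max_left B 0
    _ < 1 / n * Real.log (1 / x) - Real.log 2 := by linarith
    _ ≤ 1 / n * (Real.log (1 / x) - Real.log 2) := by linarith
    _ ≤ 1 / n * Real.log ‖φ n‖ := by gcongr

end Cremer

lemma not_summable_mul_pow_of_limsup_eq_top {φ : ℕ → ℂ}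
    (h : limsup (fun n : ℕ => (((1 / n : ℝ) * Real.log ‖φ n‖ : ℝ) : EReal)) atTop = ⊤)
    {z : ℂ} (hz : z ≠ 0) : ¬ Summable (fun n => φ n * z ^ n) := by
  intro hsum
  have hterms : ∀ᶠ n in atTop, ‖φ n * z ^ n‖ < 1 :=
    hsum.tendsto_atTop_zero.norm.eventually (gt_mem_nhds (by simp))
  obtain ⟨n, hlarge, hsmall, hn⟩ := ((EReal.limsup_coe_eq_top_iff.mp h
    (max (Real.log ‖z‖⁻¹) 0)).and_eventually (hterms.and (eventually_ge_atTop 1))).exists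
  have hn' : (0 : ℝ) < n := by exact_mod_cast hn
  have hlog : (n : ℝ) * max (Real.log ‖z‖⁻¹) 0 < Real.log ‖φ n‖ := by
    rwa [one_div, ← div_eq_inv_mul, lt_div_iff₀ hn', mul_comm] at hlarge
  have hφ : 0 < ‖φ n‖ := by
    refine (norm_nonneg _).lt_of_ne' fun h0 => ?_
    rw [h0, Real.log_zero] at hlog
    nlinarith [le_max_right (Real.log ‖z‖⁻¹) 0]
  have : 0 < Real.log ‖φ n * z ^ n‖ := by
    rw [norm_mul, norm_pow, Real.log_mul hφ.ne' (by positivity), Real.log_pow]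
    rw [Real.log_inv] at hlog
    nlinarith [le_max_left (-Real.log ‖z‖) 0]
  exact (Real.log_nonpos (norm_nonneg _) hsmall.le).not_gt this

/-- for a Cremer number `λ` there are coefficients `a_n ∈ {0,1}` (with
`a₁ = 1`) so that the recursively defined sequence `φ₀ = 0`, `φ₁ = a₁/(λ−1)`,
`φ_n = (λ^n − 1)⁻¹(a_n + Σ_{j=1}^{n−1} φ_j φ_{n−j})` satisfies
`|a_n + Σ_{j=1}^{n−1} φ_j φ_{n−j}| ≥ 1/2` for all `n ≥ 2`, hence
`limsup (1/n) log|φ_n| = +∞` and `Σ φ_n z^n` has radius of convergence zero. -/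
theorem cremer_construction_divergent_series
    (l : ℂ) (habs : ‖l‖ = 1)
    (hC : Filter.limsup
        (fun m : ℕ => (((1 / m : ℝ) * Real.log (1 / brjunoOmega l m) : ℝ) : EReal))
        Filter.atTop = ⊤) :
    ∃ a : ℕ → ℂ, a 1 = 1 ∧ (∀ n : ℕ, 2 ≤ n → a n = 0 ∨ a n = 1) ∧
      ∃ φ : ℕ → ℂ, φ 0 = 0 ∧ φ 1 = a 1 / (l - 1) ∧
        (∀ n : ℕ, 2 ≤ n →
          φ n = (l ^ n - 1)⁻¹ * (a n + ∑ j ∈ Finset.Icc 1 (n - 1), φ j * φ (n - j))) ∧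
        (∀ n : ℕ, 2 ≤ n →
          (1 / 2 : ℝ) ≤ ‖a n + ∑ j ∈ Finset.Icc 1 (n - 1), φ j * φ (n - j)‖) ∧
        Filter.limsup
            (fun n : ℕ => (((1 / n : ℝ) * Real.log ‖φ n‖ : ℝ) : EReal))
            Filter.atTop = ⊤ ∧
        ∀ z : ℂ, z ≠ 0 → ¬ Summable (fun n : ℕ => φ n * z ^ n) := by
  have hlim := limsup_log_norm_eq_top_of_inv_le
    (fun n hn => inv_two_mul_norm_le_norm_cremerSeries l hn)
    (limsup_log_inv_norm_pow_sub_one_eq_top habs hC)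
  refine ⟨cremerCoeff l, if_pos rfl, fun n hn => ?_, cremerSeries l, by rw [cremerSeries], ?_,
    fun n hn => cremerSeries_eq l hn, fun n hn => ?_, hlim,
    fun z hz => not_summable_mul_pow_of_limsup_eq_top hlim hz⟩
  · rw [cremerCoeff_of_two_le l hn]
    exact cremerChoice_eq_zero_or_eq_one _
  · rw [cremerSeries, cremerCoeff, if_pos rfl]
  · rw [cremerCoeff_of_two_le l hn]
    exact half_le_norm_cremerChoice_add _
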